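/- arXiv:2201.01937 — 2 statements merged into one kernel-verified Lean document; each statement's English description precedes it below -/
import Mathlib

section
/- Let d ≥ 1, let γ⁰,…,γᵈ be Dirac matrices, m > 0, T > 0, and let F : ℂ^{d₀} → ℂ^{d₀} be holomorphic (complex-differentiable) with complex derivative F′(u) ∈ M_{d₀}(ℂ). Suppose ψ : (−T,T) × ℝ^d → ℂ^{d₀} is twice continuously differentiable, 2π-periodic in each spatial variable, and solves the Dirac equation −i Σ_{μ=0}^d γ^μ ∂ψ/∂x^μ + m ψ = F(ψ) pointwise (with x⁰ = t). Then ψ solves pointwise the Klein–Gordon type equation ∂²ψ/∂t² − Δψ + m²ψ = G(ψ, ∂ψ), where G(ψ,∂ψ) := m F(ψ) + i Σ_{j=1}^d γʲ F′(ψ) (∂ψ/∂xʲ) − i Σ_{j=1}^d γ⁰ F′(ψ) γ⁰ γʲ (∂ψ/∂xʲ) + m γ⁰ F′(ψ) γ⁰ ψ − γ⁰ F′(ψ) γ⁰ F(ψ). -/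
open Matrix
open scoped BigOperators

noncomputable section

/-- The Minkowski metric `η` on indices `0, 1, …, d`. -/
def eta (d : ℕ) (μ ν : Fin (d + 1)) : ℝ :=
  if μ = ν then (if μ = (0 : Fin (d + 1)) then 1 else -1) else 0

/-- A family `γ⁰, γ¹, …, γᵈ` of Dirac matrices. -/
def IsDiracFamily (d d0 : ℕ) (γ : Fin (d + 1) → Matrix (Fin d0) (Fin d0) ℂ) : Prop :=
  ∀ μ ν : Fin (d + 1),
    γ μ * γ ν + γ ν * γ μ = ((2 * eta d μ ν : ℝ) : ℂ) • (1 : Matrix (Fin d0) (Fin d0) ℂ)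

/-- The partial derivative `∂ψ/∂t` (with respect to the variable `x⁰ = t`). -/
def ptderiv (d d0 : ℕ) (ψ : ℝ × (Fin d → ℝ) → Fin d0 → ℂ) (p : ℝ × (Fin d → ℝ)) :
    Fin d0 → ℂ :=
  fderiv ℝ ψ p (1, 0)

/-- The partial derivative `∂ψ/∂xʲ` in the `j`-th spatial direction. -/
def pxderiv (d d0 : ℕ) (j : Fin d) (ψ : ℝ × (Fin d → ℝ) → Fin d0 → ℂ)
    (p : ℝ × (Fin d → ℝ)) : Fin d0 → ℂ :=
  fderiv ℝ ψ p (0, Pi.single j 1)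

/-- The nonlinearity
`G(ψ,∂ψ) = m F(ψ) + i Σ γʲ F′(ψ) ∂ⱼψ − i Σ γ⁰ F′(ψ) γ⁰ γʲ ∂ⱼψ + m γ⁰ F′(ψ) γ⁰ ψ − γ⁰ F′(ψ) γ⁰ F(ψ)`. -/
def GTerm (d d0 : ℕ) (γ : Fin (d + 1) → Matrix (Fin d0) (Fin d0) ℂ) (m : ℝ)
    (F : (Fin d0 → ℂ) → Fin d0 → ℂ) (F' : (Fin d0 → ℂ) → Matrix (Fin d0) (Fin d0) ℂ)
    (ψ : ℝ × (Fin d → ℝ) → Fin d0 → ℂ) (p : ℝ × (Fin d → ℝ)) : Fin d0 → ℂ :=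
  (m : ℂ) • F (ψ p)
    + Complex.I • ∑ j : Fin d, (γ j.succ * F' (ψ p)).mulVec (pxderiv d d0 j ψ p)
    - Complex.I • ∑ j : Fin d, (γ 0 * F' (ψ p) * γ 0 * γ j.succ).mulVec (pxderiv d d0 j ψ p)
    + (m : ℂ) • (γ 0 * F' (ψ p) * γ 0).mulVec (ψ p)
    - (γ 0 * F' (ψ p) * γ 0).mulVec (F (ψ p))

/-! Differentiating the Dirac equation shows that every first derivative `∂_μ ψ` solves the
linearized equation `-i γ^ν ∂_ν (∂_μ ψ) + m ∂_μ ψ = F′(ψ) ∂_μ ψ`. Solving these equations and the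
Dirac equation itself for the time derivatives (possible since `(γ⁰)² = 1`) expresses `∂ₜ²ψ`
through spatial derivatives. The terms `γʲ γᵏ ∂ⱼ∂ₖψ` collapse to `-Δψ` by the anticommutation
relations and the symmetry of second derivatives, and `γ⁰ γʲ γ⁰ = -γʲ` produces the signs of `G`. -/

namespace IsDiracFamily

variable {d d0 : ℕ} {γ : Fin (d + 1) → Matrix (Fin d0) (Fin d0) ℂ}

theorem gamma_zero_mul_self (hγ : IsDiracFamily d d0 γ) : γ 0 * γ 0 = 1 := by
  have h := hγ 0 0
  simp only [eta, if_true, mul_one, Complex.ofReal_ofNat] at h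
  rw [← two_smul ℂ] at h
  exact smul_right_injective _ two_ne_zero h

theorem gamma_zero_mul_gamma_succ (hγ : IsDiracFamily d d0 γ) (j : Fin d) :
    γ 0 * γ j.succ = -(γ j.succ * γ 0) := by
  have h := hγ 0 j.succ
  rw [eta, if_neg (Fin.succ_ne_zero j).symm] at h
  exact eq_neg_of_add_eq_zero_left (by simpa using h)

theorem gamma_zero_conj_gamma_succ (hγ : IsDiracFamily d d0 γ) (j : Fin d) :
    γ 0 * γ j.succ * γ 0 = -γ j.succ := by
  rw [hγ.gamma_zero_mul_gamma_succ, neg_mul, mul_assoc, hγ.gamma_zero_mul_self, mul_one]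

theorem gamma_succ_anticomm (hγ : IsDiracFamily d d0 γ) (j k : Fin d) :
    γ j.succ * γ k.succ + γ k.succ * γ j.succ = if j = k then (-2 : ℂ) • 1 else 0 := by
  rw [hγ, eta]
  by_cases hjk : j = k
  · simp [hjk, Fin.succ_ne_zero]
  · simp [hjk]

end IsDiracFamily

section CliffordAlgebra

variable {n ι : Type*} [Fintype n] [DecidableEq n] [Fintype ι] [DecidableEq ι]

theorem sum_sum_mul_mulVec_of_anticomm {g : ι → Matrix n n ℂ}
    (hg : ∀ j k, g j * g k + g k * g j = if j = k then (-2 : ℂ) • 1 else 0)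
    {H : ι → ι → n → ℂ} (hH : ∀ j k, H j k = H k j) :
    ∑ j, ∑ k, (g j * g k) *ᵥ H j k = -∑ j, H j j := by
  have hswap : ∑ j, ∑ k, (g j * g k) *ᵥ H j k = ∑ j, ∑ k, (g k * g j) *ᵥ H j k := by
    rw [Finset.sum_comm]
    simp_rw [hH]
  apply smul_right_injective _ (two_ne_zero (α := ℂ))
  calc (2 : ℂ) • ∑ j, ∑ k, (g j * g k) *ᵥ H j k
      = ∑ j, ∑ k, (g j * g k + g k * g j) *ᵥ H j k := by
        simp only [two_smul, add_mulVec, Finset.sum_add_distrib]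
        rw [← hswap]
    _ = (2 : ℂ) • -∑ j, H j j := by
        have hdiag : ∀ j k, (g j * g k + g k * g j) *ᵥ H j k
            = if j = k then (-2 : ℂ) • H j j else 0 := by
          intro j k
          rw [hg]
          split_ifs with hjk
          · rw [hjk, smul_mulVec, one_mulVec]
          · exact zero_mulVec _
        simp [hdiag, Finset.smul_sum]

theorem eq_mulVec_of_neg_I_smul_add {A : Matrix n n ℂ} (hA : A * A = 1) {X Y W : n → ℂ}
    (h : -Complex.I • (A *ᵥ X + Y) = W) : X = A *ᵥ (Complex.I • W - Y) := by
  have hAX : A *ᵥ X = Complex.I • W - Y := by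
    rw [← h, smul_smul]
    simp
  rw [← hAX, mulVec_mulVec, hA, one_mulVec]

open Complex in
/-- Here `P, Q, D j, M j, H j k` stand for `∂ₜψ, ∂ₜ²ψ, ∂ⱼψ, ∂ⱼ∂ₜψ, ∂ⱼ∂ₖψ`; `hQ` and `hM` are the
linearized Dirac equations for `∂ₜψ` and `∂ⱼψ`. -/
theorem klein_gordon_of_dirac_relations {A B : Matrix n n ℂ} {g : ι → Matrix n n ℂ}
    (hA : A * A = 1) (hAg : ∀ j, A * g j * A = -g j)
    (hg : ∀ j k, g j * g k + g k * g j = if j = k then (-2 : ℂ) • 1 else 0)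
    (m : ℂ) {u f P Q : n → ℂ} {D M : ι → n → ℂ} {H : ι → ι → n → ℂ}
    (hH : ∀ j k, H j k = H k j)
    (hP : -I • (A *ᵥ P + ∑ j, g j *ᵥ D j) = f - m • u)
    (hQ : -I • (A *ᵥ Q + ∑ j, g j *ᵥ M j) = B *ᵥ P - m • P)
    (hM : ∀ j, -I • (A *ᵥ M j + ∑ k, g k *ᵥ H k j) = B *ᵥ D j - m • D j) :
    Q - ∑ j, H j j + m ^ 2 • u
      = m • f + I • ∑ j, (g j * B) *ᵥ D j - I • ∑ j, (A * B * A * g j) *ᵥ D j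
        + m • (A * B * A) *ᵥ u - (A * B * A) *ᵥ f := by
  rw [eq_mulVec_of_neg_I_smul_add hA hQ]
  simp only [fun j => eq_mulVec_of_neg_I_smul_add hA (hM j)]
  rw [eq_mulVec_of_neg_I_smul_add hA hP]
  simp only [mulVec_sub, mulVec_smul, mulVec_sum, mulVec_mulVec, smul_sub, smul_smul,
    Finset.sum_sub_distrib, ← Finset.smul_sum, hA, hAg, one_mulVec, neg_mulVec, neg_mul,
    smul_neg, Finset.sum_neg_distrib, ← mul_assoc, one_mul]
  rw [sum_sum_mul_mulVec_of_anticomm (H := fun j k => H k j) hg fun j k => hH k j]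
  match_scalars <;> ring_nf <;> simp [I_sq]

end CliffordAlgebra

open Topology

section SecondDerivatives

variable {E V W : Type*} [NormedAddCommGroup E] [NormedSpace ℝ E]
  [NormedAddCommGroup V] [NormedSpace ℝ V] [NormedAddCommGroup W] [NormedSpace ℝ W]
  {f : E → V} {p : E}

theorem fderiv_fderiv_apply (hf : DifferentiableAt ℝ (fderiv ℝ f) p) (v w : E) :
    fderiv ℝ (fun q => fderiv ℝ f q v) p w = fderiv ℝ (fderiv ℝ f) p w v := by
  rw [fderiv_clm_apply hf (differentiableAt_const v)]
  simp

theorem ContDiffAt.fderiv_fderiv_apply_comm (hf : ContDiffAt ℝ 2 f p) (v w : E) :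
    fderiv ℝ (fun q => fderiv ℝ f q v) p w = fderiv ℝ (fun q => fderiv ℝ f q w) p v := by
  have hf' : DifferentiableAt ℝ (fderiv ℝ f) p :=
    (hf.fderiv_right le_rfl).differentiableAt one_ne_zero
  rw [fderiv_fderiv_apply hf', fderiv_fderiv_apply hf', hf.isSymmSndFDerivAt (by simp)]

/-- Differentiating `Φ (Df) = G ∘ f` in the direction `w` gives the linearized equation
for `∂_w f`. -/
theorem ContDiffAt.map_fderiv_fderiv_apply_eq (hf : ContDiffAt ℝ 2 f p)
    (Φ : (E →L[ℝ] V) →L[ℝ] W) {G : V → W} {G' : V →L[ℝ] W} (hG : HasFDerivAt G G' (f p))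
    (heq : (fun q => Φ (fderiv ℝ f q)) =ᶠ[𝓝 p] fun q => G (f q)) (w : E) :
    Φ (fderiv ℝ (fun q => fderiv ℝ f q w) p) = G' (fderiv ℝ f p w) := by
  have hf' : DifferentiableAt ℝ (fderiv ℝ f) p :=
    (hf.fderiv_right le_rfl).differentiableAt one_ne_zero
  have hlhs : HasFDerivAt (fun q => Φ (fderiv ℝ f q)) (Φ.comp (fderiv ℝ (fderiv ℝ f) p)) p :=
    Φ.hasFDerivAt.comp p hf'.hasFDerivAt
  have hrhs : HasFDerivAt (fun q => G (f q)) (G'.comp (fderiv ℝ f p)) p :=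
    hG.comp p (hf.differentiableAt two_ne_zero).hasFDerivAt
  have hderiv := congrArg (fun L => L w) ((hlhs.congr_of_eventuallyEq heq.symm).unique hrhs)
  have hsymm : fderiv ℝ (fun q => fderiv ℝ f q w) p = fderiv ℝ (fderiv ℝ f) p w := by
    ext1 v
    rw [fderiv_fderiv_apply hf', hf.isSymmSndFDerivAt (by simp)]
  simpa [hsymm] using hderiv

end SecondDerivatives

section Dirac

variable {d d0 : ℕ}

/-- The derivative part `-i γ^μ ∂_μ` of the Dirac operator, as a function of `L = Dψ(p)`. -/
def diracCLM (γ : Fin (d + 1) → Matrix (Fin d0) (Fin d0) ℂ) :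
    ((ℝ × (Fin d → ℝ)) →L[ℝ] (Fin d0 → ℂ)) →L[ℝ] (Fin d0 → ℂ) :=
  LinearMap.toContinuousLinearMap
    { toFun := fun L => -Complex.I • (γ 0 *ᵥ L (1, 0) + ∑ j, γ j.succ *ᵥ L (0, Pi.single j 1))
      map_add' := fun L L' => by
        simp only [_root_.add_apply, mulVec_add, Finset.sum_add_distrib, smul_add]
        abel
      map_smul' := fun r L => by
        simp only [_root_.smul_apply, mulVec_smul, ← Finset.smul_sum, ← smul_add,
          RingHom.id_apply]
        exact smul_comm _ _ _ }

theorem diracCLM_fderiv (γ : Fin (d + 1) → Matrix (Fin d0) (Fin d0) ℂ)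
    (φ : ℝ × (Fin d → ℝ) → Fin d0 → ℂ) (p : ℝ × (Fin d → ℝ)) :
    diracCLM γ (fderiv ℝ φ p)
      = -Complex.I • (γ 0 *ᵥ ptderiv d d0 φ p + ∑ j, γ j.succ *ᵥ pxderiv d d0 j φ p) :=
  rfl

end Dirac

theorem dirac_implies_klein_gordon_general (d : ℕ) (d0 : ℕ)
    (γ : Fin (d + 1) → Matrix (Fin d0) (Fin d0) ℂ) (hγ : IsDiracFamily d d0 γ)
    (m : ℝ) (T : ℝ)
    (F : (Fin d0 → ℂ) → Fin d0 → ℂ) (F' : (Fin d0 → ℂ) → Matrix (Fin d0) (Fin d0) ℂ)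
    (hF : ∀ u : Fin d0 → ℂ,
      HasFDerivAt F (LinearMap.toContinuousLinearMap (Matrix.mulVecLin (F' u))) u)
    (ψ : ℝ × (Fin d → ℝ) → Fin d0 → ℂ)
    (hψ : ContDiffOn ℝ 2 ψ (Set.Ioo (-T) T ×ˢ (Set.univ : Set (Fin d → ℝ))))
    (hdirac : ∀ p ∈ Set.Ioo (-T) T ×ˢ (Set.univ : Set (Fin d → ℝ)),
      (-Complex.I) • ((γ 0).mulVec (ptderiv d d0 ψ p)
          + ∑ j : Fin d, (γ j.succ).mulVec (pxderiv d d0 j ψ p))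
        + (m : ℂ) • ψ p = F (ψ p)) :
    ∀ p ∈ Set.Ioo (-T) T ×ˢ (Set.univ : Set (Fin d → ℝ)),
      ptderiv d d0 (ptderiv d d0 ψ) p
          - (∑ j : Fin d, pxderiv d d0 j (pxderiv d d0 j ψ) p)
          + (((m : ℂ)) ^ 2) • ψ p
        = GTerm d d0 γ m F F' ψ p := by
  intro p hp
  have hU : IsOpen (Set.Ioo (-T) T ×ˢ (Set.univ : Set (Fin d → ℝ))) :=
    isOpen_Ioo.prod isOpen_univ
  have hψp : ContDiffAt ℝ 2 ψ p := hψ.contDiffAt (hU.mem_nhds hp)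
  have hdirac_op : ∀ q ∈ Set.Ioo (-T) T ×ˢ (Set.univ : Set (Fin d → ℝ)),
      diracCLM γ (fderiv ℝ ψ q) = F (ψ q) - (m : ℂ) • ψ q :=
    fun q hq => eq_sub_of_add_eq (hdirac q hq)
  have hG : HasFDerivAt (fun v => F v - (m : ℂ) • v)
      (((LinearMap.toContinuousLinearMap (F' (ψ p)).mulVecLin).restrictScalars ℝ)
        - (m : ℂ) • ContinuousLinearMap.id ℝ (Fin d0 → ℂ)) (ψ p) :=
    ((hF (ψ p)).restrictScalars ℝ).sub ((hasFDerivAt_id (𝕜 := ℝ) _).const_smul (m : ℂ))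
  have hlin := hψp.map_fderiv_fderiv_apply_eq (diracCLM γ) hG
    (Filter.eventuallyEq_of_mem (hU.mem_nhds hp) hdirac_op)
  have htime : diracCLM γ (fderiv ℝ (ptderiv d d0 ψ) p)
      = F' (ψ p) *ᵥ ptderiv d d0 ψ p - (m : ℂ) • ptderiv d d0 ψ p :=
    hlin (1, 0)
  have hspace : ∀ j, diracCLM γ (fderiv ℝ (pxderiv d d0 j ψ) p)
      = F' (ψ p) *ᵥ pxderiv d d0 j ψ p - (m : ℂ) • pxderiv d d0 j ψ p :=
    fun j => hlin (0, Pi.single j 1)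
  have hmixed : ∀ j, ptderiv d d0 (pxderiv d d0 j ψ) p = pxderiv d d0 j (ptderiv d d0 ψ) p :=
    fun j => hψp.fderiv_fderiv_apply_comm _ _
  simp only [diracCLM_fderiv, hmixed] at htime hspace
  exact klein_gordon_of_dirac_relations hγ.gamma_zero_mul_self hγ.gamma_zero_conj_gamma_succ
    hγ.gamma_succ_anticomm (m : ℂ) (fun j k => hψp.fderiv_fderiv_apply_comm _ _)
    (hdirac_op p hp) htime hspace

/-- a `C²`, spatially `2π`-periodic solution of the Dirac equation
`-i Σ_μ γ^μ ∂ψ/∂x^μ + m ψ = F(ψ)` on `(-T,T) × ℝᵈ` solves the Klein–Gordon type equation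
`∂²ψ/∂t² − Δψ + m²ψ = G(ψ, ∂ψ)` pointwise. -/
theorem dirac_implies_klein_gordon (d : ℕ) (hd : 1 ≤ d) (d0 : ℕ)
    (hd0 : d0 = 2 ^ ((d + 1) / 2))
    (γ : Fin (d + 1) → Matrix (Fin d0) (Fin d0) ℂ) (hγ : IsDiracFamily d d0 γ)
    (m : ℝ) (hm : 0 < m) (T : ℝ) (hT : 0 < T)
    (F : (Fin d0 → ℂ) → Fin d0 → ℂ) (F' : (Fin d0 → ℂ) → Matrix (Fin d0) (Fin d0) ℂ)
    (hF : ∀ u : Fin d0 → ℂ,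
      HasFDerivAt F (LinearMap.toContinuousLinearMap (Matrix.mulVecLin (F' u))) u)
    (ψ : ℝ × (Fin d → ℝ) → Fin d0 → ℂ)
    (hψ : ContDiffOn ℝ 2 ψ (Set.Ioo (-T) T ×ˢ (Set.univ : Set (Fin d → ℝ))))
    (hper : ∀ t : ℝ, ∀ x : Fin d → ℝ, ∀ j : Fin d,
      ψ (t, x + Pi.single j (2 * Real.pi)) = ψ (t, x))
    (hdirac : ∀ p ∈ Set.Ioo (-T) T ×ˢ (Set.univ : Set (Fin d → ℝ)),
      (-Complex.I) • ((γ 0).mulVec (ptderiv d d0 ψ p)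
          + ∑ j : Fin d, (γ j.succ).mulVec (pxderiv d d0 j ψ p))
        + (m : ℂ) • ψ p = F (ψ p)) :
    ∀ p ∈ Set.Ioo (-T) T ×ˢ (Set.univ : Set (Fin d → ℝ)),
      ptderiv d d0 (ptderiv d d0 ψ) p
          - (∑ j : Fin d, pxderiv d d0 j (pxderiv d d0 j ψ) p)
          + (((m : ℂ)) ^ 2) • ψ p
        = GTerm d d0 γ m F F' ψ p :=
  dirac_implies_klein_gordon_general d d0 γ hγ m T F F' hF ψ hψ hdirac

end
end

section
/- Let d₀ ≥ 1, let r > 0, and let (𝐜_𝐩)_{𝐩 ∈ ℕ^{d₀}, |𝐩| ≥ 1} be vectors in ℂ^{d₀} with Σ_𝐩 |𝐜_𝐩| r^{|𝐩|} < ∞, and define F(u) := Σ_{|𝐩|≥1} 𝐜_𝐩 u^𝐩 for u ∈ ℂ^{d₀} with max_k |u_k| < r. Then for all u¹, u² ∈ ℂ^{d₀} with max_k |u¹_k| < r/4 and max_k |u²_k| < r/4, the identity F(u¹) − F(u²) = Σ_{|𝐩|≥1} Σ_{i=1}^{d₀} Σ_{𝐦+𝐧=(𝐩−e_i)⁺}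 p_i · (c_{𝐦𝐧}/(|𝐦|+1)) · 𝐜_𝐩 · (u¹−u²)^𝐦 (u²)^𝐧 (u¹_i − u²_i) holds, with the triple series converging absolutely. -/
open scoped BigOperators

noncomputable section

/-- The multi-index `(𝐩 - e_i)⁺`: the `i`-th entry is `max (p_i - 1) 0`, the others are
unchanged. -/
def subIndex (d0 : ℕ) (p : Fin d0 → ℕ) (i : Fin d0) : Fin d0 → ℕ :=
  fun k => if k = i then p i - 1 else p k

/-- The generic term of the triple series expressing `F(u¹) - F(u²)`:
`p_i · (c_{𝐦𝐧}/(|𝐦|+1)) · 𝐜_𝐩 · (u¹-u²)^𝐦 (u²)^𝐧 (u¹_i - u²_i)` with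
`𝐧 = (𝐩-e_i)⁺ - 𝐦` and `c_{𝐦𝐧} = ∏ binom((𝐩-e_i)⁺_k, m_k)`. -/
def diffSeriesTerm (d0 : ℕ) (c : (Fin d0 → ℕ) → Fin d0 → ℂ) (u1 u2 : Fin d0 → ℂ)
    (p : Fin d0 → ℕ) (i : Fin d0) (m : Fin d0 → ℕ) : Fin d0 → ℂ :=
  ((p i : ℂ) * (∏ k : Fin d0, ((subIndex d0 p i k).choose (m k) : ℂ))
      / (((∑ k : Fin d0, m k : ℕ) : ℂ) + 1)
    * ((∏ k : Fin d0, (u1 k - u2 k) ^ m k)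
        * (∏ k : Fin d0, u2 k ^ (subIndex d0 p i k - m k))
        * (u1 i - u2 i))) • c p

/-!
Write `v = u¹ - u²` and `w = u²`. Shifting `𝐦 ↦ 𝐦 + e_i` turns `p_i c_{𝐦𝐧} / (|𝐦| + 1)` into
`(m_i / |𝐦|) binom(𝐩, 𝐦)` with `𝐦 + 𝐧 = 𝐩`, so summing over `i` collapses the inner double sum
for a fixed `𝐩` to `Σ_{0 ≠ 𝐦 ≤ 𝐩} binom(𝐩, 𝐦) v^𝐦 w^{𝐩-𝐦} = (v + w)^𝐩 - w^𝐩 = (u¹)^𝐩 - (u²)^𝐩`.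
All coefficients are nonnegative, so the same identity for `‖v_k‖, ‖w_k‖` bounds the inner
sum of norms by `(‖v‖ + ‖w‖)^𝐩 ≤ r^{|𝐩|}`, because `‖v_k‖ + ‖w_k‖ < 3r/4`.
-/

open Finset

section MultiIndex

variable {d : ℕ}

lemma subIndex_add_single {p : Fin d → ℕ} {i : Fin d} (hp : p i ≠ 0) :
    subIndex d p i + Pi.single i 1 = p := by
  funext k
  rcases eq_or_ne k i with rfl | hk
  · simp only [subIndex, if_true, Pi.add_apply, Pi.single_eq_same]
    omega
  · simp [subIndex, hk]

lemma subIndex_add_single_self (q : Fin d → ℕ) (i : Fin d) :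
    subIndex d (q + Pi.single i 1) i = q := by
  funext k
  rcases eq_or_ne k i with rfl | hk
  · simp [subIndex]
  · simp [subIndex, hk]

lemma sum_add_single (m : Fin d → ℕ) (i : Fin d) :
    ∑ k, (m + Pi.single i 1 : Fin d → ℕ) k = ∑ k, m k + 1 := by
  simp [sum_add_distrib]

lemma prod_pow_add_single {M : Type*} [CommMonoid M] (a : Fin d → M) (m : Fin d → ℕ)
    (i : Fin d) : ∏ k, a k ^ (m + Pi.single i 1 : Fin d → ℕ) k = (∏ k, a k ^ m k) * a i := by
  simp only [Pi.add_apply, pow_add, prod_mul_distrib, Pi.single_apply, pow_ite, pow_one, pow_zero,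
    prod_ite_eq', mem_univ, if_true]

lemma add_one_mul_prod_choose_add_single (q m : Fin d → ℕ) (i : Fin d) :
    (m i + 1) * ∏ k, ((q + Pi.single i 1 : Fin d → ℕ) k).choose ((m + Pi.single i 1 : Fin d → ℕ) k)
      = (q i + 1) * ∏ k, (q k).choose (m k) := by
  have hoff : ∏ k ∈ {i}ᶜ,
        ((q + Pi.single i 1 : Fin d → ℕ) k).choose ((m + Pi.single i 1 : Fin d → ℕ) k)
      = ∏ k ∈ {i}ᶜ, (q k).choose (m k) :=
    prod_congr rfl fun k hk => by
      simp [Pi.single_eq_of_ne (by simpa using hk : k ≠ i)]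
  rw [Fintype.prod_eq_mul_prod_compl i, Fintype.prod_eq_mul_prod_compl i, hoff]
  simp only [Pi.add_apply, Pi.single_eq_same]
  rw [← mul_assoc, ← mul_assoc, mul_comm (m i + 1), Nat.add_one_mul_choose_eq]

lemma sum_Iic_add_single {M : Type*} [AddCommMonoid M] (f : (Fin d → ℕ) → M)
    (q : Fin d → ℕ) (i : Fin d) (hf : ∀ m, m i = 0 → f m = 0) :
    ∑ m ∈ Iic q, f (m + Pi.single i 1) = ∑ m ∈ Iic (q + Pi.single i 1), f m := by
  have hsingle_le {m : Fin d → ℕ} (hm : m i ≠ 0) : Pi.single i 1 ≤ m := fun k => by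
    rcases eq_or_ne k i with rfl | hk
    · simpa [Nat.one_le_iff_ne_zero] using hm
    · simp [Pi.single_eq_of_ne hk]
  calc ∑ m ∈ Iic q, f (m + Pi.single i 1)
      = ∑ m ∈ (Icc 0 q).map (addRightEmbedding (Pi.single i 1)), f m := by
        rw [sum_map]; rfl
    _ = ∑ m ∈ Icc (Pi.single i 1) (q + Pi.single i 1), f m := by
        rw [map_add_right_Icc, zero_add]
    _ = ∑ m ∈ Iic (q + Pi.single i 1), f m :=
        sum_subset Icc_subset_Iic_self fun m hm hmIcc => hf m <| by
          by_contra h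
          exact hmIcc (mem_Icc.mpr ⟨hsingle_le h, mem_Iic.mp hm⟩)

end MultiIndex

section Multinomial

variable {R : Type*} [CommSemiring R] {d : ℕ}

def multiBinomialTerm (v w : Fin d → R) (p m : Fin d → ℕ) : R :=
  (∏ k, ((p k).choose (m k) : R)) * ((∏ k, v k ^ m k) * ∏ k, w k ^ (p k - m k))

theorem prod_add_pow_eq_sum_multiBinomialTerm (v w : Fin d → R) (p : Fin d → ℕ) :
    ∏ k, (v k + w k) ^ p k = ∑ m ∈ Iic p, multiBinomialTerm v w p m := by
  have hcoord (k : Fin d) : (v k + w k) ^ p k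
      = ∑ j ∈ Iic (p k), ((p k).choose j : R) * (v k ^ j * w k ^ (p k - j)) := by
    rw [add_pow, Nat.range_succ_eq_Iic]
    exact sum_congr rfl fun j _ => by ring
  simp only [hcoord, multiBinomialTerm]
  rw [prod_univ_sum]
  exact sum_congr rfl fun m _ => by rw [prod_mul_distrib, prod_mul_distrib]

@[simp]
lemma multiBinomialTerm_zero (v w : Fin d → R) (p : Fin d → ℕ) :
    multiBinomialTerm v w p 0 = ∏ k, w k ^ p k := by
  simp [multiBinomialTerm]

end Multinomial

section DiffCoeff

variable {K : Type*} [Field K] {d : ℕ}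

def diffCoeff (v w : Fin d → K) (p : Fin d → ℕ) (i : Fin d) (m : Fin d → ℕ) : K :=
  (p i : K) * (∏ k, ((subIndex d p i k).choose (m k) : K)) / (((∑ k, m k : ℕ) : K) + 1)
    * ((∏ k, v k ^ m k) * (∏ k, w k ^ (subIndex d p i k - m k)) * v i)

variable [CharZero K]

lemma diffCoeff_add_single (v w : Fin d → K) (q m : Fin d → ℕ) (i : Fin d) :
    diffCoeff v w (q + Pi.single i 1) i m
      = ((m + Pi.single i 1 : Fin d → ℕ) i : K) / (∑ k, (m + Pi.single i 1 : Fin d → ℕ) k : ℕ)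
        * multiBinomialTerm v w (q + Pi.single i 1) (m + Pi.single i 1) := by
  have hchoose : ((m i : K) + 1) * ∏ k, (((q + Pi.single i 1 : Fin d → ℕ) k).choose
        ((m + Pi.single i 1 : Fin d → ℕ) k) : K)
      = ((q i : K) + 1) * ∏ k, ((q k).choose (m k) : K) := by
    exact_mod_cast add_one_mul_prod_choose_add_single q m i
  have hexp : ∏ k, w k ^ ((q + Pi.single i 1 : Fin d → ℕ) k - (m + Pi.single i 1 : Fin d → ℕ) k)
      = ∏ k, w k ^ (q k - m k) := by
    simp only [Pi.add_apply, Nat.add_sub_add_right]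
  rw [diffCoeff, multiBinomialTerm, subIndex_add_single_self, sum_add_single, prod_pow_add_single,
    hexp]
  simp only [Pi.add_apply, Pi.single_eq_same, Nat.cast_add, Nat.cast_one]
  linear_combination -(∏ k, v k ^ m k) * (∏ k, w k ^ (q k - m k)) * v i
    / ((∑ k, m k : ℕ) + 1 : K) * hchoose

lemma sum_diffCoeff_eq_sum_multiBinomialTerm (v w : Fin d → K) (p : Fin d → ℕ) (i : Fin d) :
    ∑ m ∈ Iic (subIndex d p i), diffCoeff v w p i m
      = ∑ m ∈ Iic p, (m i : K) / (∑ k, m k : ℕ) * multiBinomialTerm v w p m := by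
  by_cases hp : p i = 0
  · have hvanish (m) (hm : m ∈ Iic p) : m i = 0 := Nat.eq_zero_of_le_zero (hp ▸ mem_Iic.mp hm i)
    rw [sum_eq_zero fun m _ => by simp [diffCoeff, hp],
      sum_eq_zero fun m hm => by simp [hvanish m hm]]
  · obtain ⟨q, rfl⟩ : ∃ q : Fin d → ℕ, p = q + Pi.single i 1 := ⟨_, (subIndex_add_single hp).symm⟩
    rw [subIndex_add_single_self]
    simp only [diffCoeff_add_single]
    exact (sum_Iic_add_single (fun m => (m i : K) / (∑ k, m k : ℕ)
      * multiBinomialTerm v w (q + Pi.single i 1) m) q i fun m hm => by simp [hm] :)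

theorem sum_sum_diffCoeff (v w : Fin d → K) (p : Fin d → ℕ) :
    ∑ i, ∑ m ∈ Iic (subIndex d p i), diffCoeff v w p i m
      = ∏ k, (v k + w k) ^ p k - ∏ k, w k ^ p k := by
  simp only [sum_diffCoeff_eq_sum_multiBinomialTerm]
  rw [sum_comm]
  simp only [← sum_mul, ← sum_div, ← Nat.cast_sum]
  -- `|𝐦| / |𝐦|` is `1` except at `𝐦 = 0`, where it is `0 / 0 = 0`: this drops the `w^𝐩` term.
  rw [prod_add_pow_eq_sum_multiBinomialTerm, ← multiBinomialTerm_zero v w p,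
    ← sum_erase_eq_sub (mem_Iic.mpr (zero_le (a := p))), ← sum_erase (a := 0) _ (by simp)]
  refine sum_congr rfl fun m hm => ?_
  have hsum : (∑ k, m k : ℕ) ≠ 0 := fun h =>
    ne_of_mem_erase hm (funext fun k => sum_eq_zero_iff.mp h k (mem_univ k))
  rw [div_self (Nat.cast_ne_zero.mpr hsum), one_mul]

end DiffCoeff

lemma prod_pow_le_pow_sum {ι : Type*} [Fintype ι] {a : ι → ℝ} {r : ℝ} (ha : ∀ k, 0 ≤ a k)
    (har : ∀ k, a k ≤ r) (p : ι → ℕ) : ∏ k, a k ^ p k ≤ r ^ ∑ k, p k := by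
  rw [← prod_pow_eq_pow_sum]
  exact prod_le_prod (fun k _ => pow_nonneg (ha k) _) fun k _ => pow_le_pow_left₀ (ha k) (har k) _

section Norms

variable {𝕜 : Type*} [RCLike 𝕜] {d : ℕ}

lemma norm_diffCoeff (v w : Fin d → 𝕜) (p : Fin d → ℕ) (i : Fin d) (m : Fin d → ℕ) :
    ‖diffCoeff v w p i m‖ = diffCoeff (fun k => ‖v k‖) (fun k => ‖w k‖) p i m := by
  simp only [diffCoeff, norm_mul, norm_div, norm_prod, norm_pow, RCLike.norm_natCast,
    ← Nat.cast_succ]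

lemma sum_sum_norm_diffCoeff_le (v w : Fin d → 𝕜) {r : ℝ} (hr : ∀ k, ‖v k‖ + ‖w k‖ ≤ r)
    (p : Fin d → ℕ) :
    ∑ i, ∑ m ∈ Iic (subIndex d p i), ‖diffCoeff v w p i m‖ ≤ r ^ ∑ k, p k := by
  simp only [norm_diffCoeff, sum_sum_diffCoeff]
  calc ∏ k, (‖v k‖ + ‖w k‖) ^ p k - ∏ k, ‖w k‖ ^ p k
      ≤ ∏ k, (‖v k‖ + ‖w k‖) ^ p k := sub_le_self _ (by positivity)
    _ ≤ r ^ ∑ k, p k := prod_pow_le_pow_sum (fun k => by positivity) hr p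

lemma summable_prod_pow_smul {E : Type*} [NormedAddCommGroup E] [NormedSpace 𝕜 E]
    [CompleteSpace E] {c : (Fin d → ℕ) → E} {r : ℝ}
    (hc : Summable fun p : Fin d → ℕ => ‖c p‖ * r ^ ∑ k, p k) {u : Fin d → 𝕜}
    (hu : ∀ k, ‖u k‖ ≤ r) :
    Summable fun p : Fin d → ℕ => (∏ k, u k ^ p k) • c p := by
  refine hc.of_norm_bounded fun p => ?_
  rw [norm_smul, norm_prod, mul_comm]
  simp only [norm_pow]
  exact mul_le_mul_of_nonneg_left (prod_pow_le_pow_sum (fun k => norm_nonneg _) hu p)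
    (norm_nonneg _)

end Norms

theorem power_series_difference_formula_general (d0 : ℕ) (r : ℝ)
    (c : (Fin d0 → ℕ) → Fin d0 → ℂ)
    (hsum : Summable (fun p : Fin d0 → ℕ => ‖c p‖ * r ^ (∑ k : Fin d0, p k)))
    (u1 u2 : Fin d0 → ℂ)
    (hu1 : ∀ k : Fin d0, ‖u1 k‖ < r / 4)
    (hu2 : ∀ k : Fin d0, ‖u2 k‖ < r / 4) :
    ((∑' p : Fin d0 → ℕ, (∏ k : Fin d0, u1 k ^ p k) • c p)
        - (∑' p : Fin d0 → ℕ, (∏ k : Fin d0, u2 k ^ p k) • c p)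
      = ∑' p : Fin d0 → ℕ, ∑ i : Fin d0, ∑ m ∈ Finset.Iic (subIndex d0 p i),
          diffSeriesTerm d0 c u1 u2 p i m) ∧
    Summable (fun p : Fin d0 → ℕ => ∑ i : Fin d0, ∑ m ∈ Finset.Iic (subIndex d0 p i),
      ‖diffSeriesTerm d0 c u1 u2 p i m‖) := by
  have hterm (p i m) : diffSeriesTerm d0 c u1 u2 p i m = diffCoeff (u1 - u2) u2 p i m • c p := rfl
  have hr (k) : ‖u1 k - u2 k‖ + ‖u2 k‖ ≤ r := by
    linarith [norm_sub_le (u1 k) (u2 k), norm_nonneg (u2 k), hu1 k, hu2 k]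
  have hsummable {u : Fin d0 → ℂ} (hu : ∀ k, ‖u k‖ < r / 4) :=
    summable_prod_pow_smul hsum fun k => by linarith [norm_nonneg (u k), hu k]
  refine ⟨?_, ?_⟩
  · rw [← (hsummable hu1).tsum_sub (hsummable hu2)]
    refine tsum_congr fun p => ?_
    simp only [hterm, ← sum_smul, sum_sum_diffCoeff, Pi.sub_apply, sub_add_cancel, sub_smul]
  · refine hsum.of_nonneg_of_le (fun p => by positivity) fun p => ?_
    simp only [hterm, norm_smul, ← sum_mul, mul_comm (‖c p‖)]
    exact mul_le_mul_of_nonneg_right (sum_sum_norm_diffCoeff_le _ _ hr p) (norm_nonneg _)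

/-- for `F(u) = Σ_{|𝐩|≥1} 𝐜_𝐩 u^𝐩` with coefficients summable at radius `r`, and
`u¹, u²` of sup-norm `< r/4`, the difference `F(u¹) - F(u²)` equals the absolutely convergent
triple series `Σ_𝐩 Σ_i Σ_{𝐦+𝐧=(𝐩-e_i)⁺} p_i (c_{𝐦𝐧}/(|𝐦|+1)) 𝐜_𝐩 (u¹-u²)^𝐦 (u²)^𝐧 (u¹_i-u²_i)`. -/
theorem power_series_difference_formula (d0 : ℕ) (hd0 : 1 ≤ d0) (r : ℝ) (hr : 0 < r)
    (c : (Fin d0 → ℕ) → Fin d0 → ℂ) (hc0 : c 0 = 0)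
    (hsum : Summable (fun p : Fin d0 → ℕ => ‖c p‖ * r ^ (∑ k : Fin d0, p k)))
    (u1 u2 : Fin d0 → ℂ)
    (hu1 : ∀ k : Fin d0, ‖u1 k‖ < r / 4)
    (hu2 : ∀ k : Fin d0, ‖u2 k‖ < r / 4) :
    ((∑' p : Fin d0 → ℕ, (∏ k : Fin d0, u1 k ^ p k) • c p)
        - (∑' p : Fin d0 → ℕ, (∏ k : Fin d0, u2 k ^ p k) • c p)
      = ∑' p : Fin d0 → ℕ, ∑ i : Fin d0, ∑ m ∈ Finset.Iic (subIndex d0 p i),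
          diffSeriesTerm d0 c u1 u2 p i m) ∧
    Summable (fun p : Fin d0 → ℕ => ∑ i : Fin d0, ∑ m ∈ Finset.Iic (subIndex d0 p i),
      ‖diffSeriesTerm d0 c u1 u2 p i m‖) :=
  power_series_difference_formula_general d0 r c hsum u1 u2 hu1 hu2

end
end
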